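/- arXiv:1602.06674 — 2 statements merged into one kernel-verified Lean document; each statement's English description precedes it below -/
import Mathlib

section
/- Given a family of nestings (η^x)_{x ∈ X} on a topological space X indexed by points of X, the assignment η(x₁,…,xₘ) = ⋂_{i=1}^m η^{x_i}(x₁,…,x_i) is a nesting on X. -/
/-- A *nesting* on a topological space `X`: an assignment of an open subset of `X` to each
finite sequence in `X` such that the empty sequence is sent to `X`, such that
`η(x₁,…,xₙ)` is an open neighborhood of `x₁` whenever `x₁ ∈ η(x₂,…,xₙ)`, and which is
contravariantly monotone under nondecreasing reindexing maps. -/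
structure Nesting (X : Type*) [TopologicalSpace X] where
  η : (n : ℕ) → (Fin n → X) → Set X
  isOpen : ∀ (n : ℕ) (x : Fin n → X), IsOpen (η n x)
  empty : ∀ x : Fin 0 → X, η 0 x = Set.univ
  nbhd : ∀ (n : ℕ) (x : Fin (n + 1) → X),
    x 0 ∈ η n (fun i => x i.succ) → x 0 ∈ η (n + 1) x
  mono : ∀ (m n : ℕ) (f : Fin m → Fin n), Monotone f →
    ∀ x : Fin n → X, η n x ⊆ η m (x ∘ f)

/-- Given a family of nestings `(η^x)_{x ∈ X}` indexed by the points of `X`, the assignment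
`η(x₁,…,xₘ) = ⋂_{i=1}^m η^{x_i}(x₁,…,x_i)` is a nesting on `X`. -/
theorem stmt_7 {X : Type*} [TopologicalSpace X] (ηfam : X → Nesting X) :
    ∃ ν : Nesting X, ∀ (m : ℕ) (x : Fin m → X),
      ν.η m x = ⋂ i : Fin m,
        (ηfam (x i)).η (i + 1) (fun j : Fin (i + 1) =>
          x ⟨j, lt_of_lt_of_le j.isLt i.isLt⟩) := by
  refine ⟨⟨fun m x => ⋂ i : Fin m, (ηfam (x i)).η (i + 1) (fun j : Fin (i + 1) =>
      x ⟨j, lt_of_lt_of_le j.isLt i.isLt⟩), ?_, ?_, ?_, ?_⟩, fun m x => rfl⟩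
  · intro n x
    exact isOpen_iInter_of_finite fun i => (ηfam (x i)).isOpen _ _
  · intro x
    simp
  · intro n x h
    simp only [Set.mem_iInter] at h ⊢
    intro i
    induction i using Fin.cases with
    | zero =>
      have := (ηfam (x 0)).nbhd 0 (fun j : Fin 1 =>
        x ⟨j, lt_of_lt_of_le j.isLt (Nat.succ_le_succ (Nat.zero_le n))⟩)
      exact this (by rw [(ηfam (x 0)).empty]; trivial)
    | succ j =>
      have hj := h j
      have := (ηfam (x j.succ)).nbhd (j + 1) (fun k : Fin (j + 2) =>
        x ⟨k, by omega⟩)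
      exact this (h j)
  · intro m n f hf x a ha
    simp only [Set.mem_iInter] at ha ⊢
    intro i
    have hg : Monotone (fun j : Fin (i + 1) =>
        (⟨(f ⟨j, lt_of_lt_of_le j.isLt i.isLt⟩ : Fin n).val,
          Nat.lt_succ_of_le (hf (show (⟨j, lt_of_lt_of_le j.isLt i.isLt⟩ : Fin m) ≤ i from
            Fin.mk_le_of_le_val (Nat.lt_succ_iff.mp j.isLt)))⟩ : Fin ((f i : ℕ) + 1))) := by
      intro a b hab
      exact hf (show (⟨a, _⟩ : Fin m) ≤ ⟨b, _⟩ from hab)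
    have := (ηfam (x (f i))).mono (i + 1) ((f i : ℕ) + 1) _ hg
      (fun k : Fin ((f i : ℕ) + 1) => x ⟨k, lt_of_lt_of_le k.isLt (f i).isLt⟩) (ha (f i))
    exact this
end

section
/- Let X be a topological space with nesting η and (η^x)_{x∈X} a family of nestings. Define η'(x₁,…,xₘ) = ⋂_{i=1}^m η^{x_i}(x₁,…,x_i). Then every singular simplex σ ∈ C_n^{η'}(X) lies in C_{n,b(σ)}^{η^{b(σ)}}(X); i.e., C_n^{η'}(X) ⊆ ⊕_{x∈X} C_{n,x}^{η^x}(X). -/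
open SimplexCategory NNReal CategoryTheory

namespace SimplexCategory

/-- The topological simplex of `x`, as defined in the older Mathlib (removed since):
the nonnegative-real-valued functions on the vertices summing to `1`. -/
def toTopObj (x : SimplexCategory) : Set (Fin (x.len + 1) → ℝ≥0) :=
  { f | ∑ i, f i = 1 }

/-- The map of topological simplices induced by a morphism, as in the older Mathlib. -/
def toTopMap {x y : SimplexCategory} (f : x ⟶ y) (g : x.toTopObj) : y.toTopObj :=
  ⟨fun i => ∑ j ∈ Finset.univ.filter (f.toOrderHom · = i), g.1 j, by
    show ∑ i, ∑ j ∈ Finset.univ.filter (f.toOrderHom · = i), g.1 j = 1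
    rw [Finset.sum_fiberwise Finset.univ (fun j => f.toOrderHom j) g.1]
    exact g.2⟩

theorem continuous_toTopMap {x y : SimplexCategory} (f : x ⟶ y) : Continuous (toTopMap f) := by
  refine Continuous.subtype_mk (continuous_pi fun i => ?_) _
  exact continuous_finset_sum _ (fun j _ => (continuous_apply _).comp continuous_subtype_val)

end SimplexCategory

/-- The barycenter of the topological `n`-simplex. -/
noncomputable def simplexBarycenter (n : ℕ) : (SimplexCategory.mk n).toTopObj :=
  ⟨fun _ => ((n : ℝ≥0) + 1)⁻¹, by
    show ∑ _i : Fin (n + 1), ((n : ℝ≥0) + 1)⁻¹ = 1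
    rw [Finset.sum_const, Finset.card_univ, Fintype.card_fin, nsmul_eq_mul]
    push_cast
    exact mul_inv_cancel₀ (by positivity)⟩

/-- A singular simplex in `X` of some dimension: a continuous map from a topological
standard simplex to `X`. -/
def SingSimplex (X : Type*) [TopologicalSpace X] : Type _ :=
  Σ n : ℕ, C((SimplexCategory.mk n).toTopObj, X)

/-- The image in `X` of the barycenter of a singular simplex. -/
noncomputable def barycenterImage {X : Type*} [TopologicalSpace X] (σ : SingSimplex X) :
    X :=
  σ.2 (simplexBarycenter σ.1)

/-- `τ` is a face of `σ`: `τ` is the restriction of `σ` along (the topological realization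
of) an injective monotone map of standard simplices. -/
def IsFace {X : Type*} [TopologicalSpace X] (τ σ : SingSimplex X) : Prop :=
  ∃ f : SimplexCategory.mk τ.1 ⟶ SimplexCategory.mk σ.1,
    Function.Injective f.toOrderHom ∧
    τ.2 = σ.2.comp ⟨SimplexCategory.toTopMap f, SimplexCategory.continuous_toTopMap f⟩

/-- `τ` is a proper (strict) face of `σ`. -/
def IsStrictFace {X : Type*} [TopologicalSpace X] (τ σ : SingSimplex X) : Prop :=
  IsFace τ σ ∧ τ.1 < σ.1

/-- A singular simplex `σ` is `η`-small (i.e. generates `C^η`): for every chain of face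
inclusions `σ₁ ⊆ ⋯ ⊆ σ_m ⊆ σ`, the image of `σ₁` is contained in
`η(b(σ₁),…,b(σ_m))`. -/
def EtaSmall {X : Type*} [TopologicalSpace X] (ν : Nesting X) (σ : SingSimplex X) :
    Prop :=
  ∀ (m : ℕ) (τ : Fin (m + 1) → SingSimplex X),
    (∀ i : Fin m, IsFace (τ i.castSucc) (τ i.succ)) →
    IsFace (τ (Fin.last m)) σ →
    Set.range (τ 0).2 ⊆ ν.η (m + 1) (fun i => barycenterImage (τ i))

/-- Let `(η^x)_{x ∈ X}` be a family of nestings on `X` and `η'` the nesting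
`η'(x₁,…,xₘ) = ⋂_{i=1}^m η^{x_i}(x₁,…,x_i)`.  Then every `η'`-small singular simplex `σ`
is `η^{b(σ)}`-small (with barycenter image `b(σ)`); i.e.
`C_n^{η'}(X) ⊆ ⊕_{x ∈ X} C_{n,x}^{η^x}(X)`. -/
theorem stmt_15 {X : Type*} [TopologicalSpace X] (ηfam : X → Nesting X)
    (ν : Nesting X)
    (hν : ∀ (m : ℕ) (y : Fin m → X),
      ν.η m y = ⋂ i : Fin m,
        (ηfam (y i)).η (i + 1) (fun j : Fin (i + 1) =>
          y ⟨j, lt_of_lt_of_le j.isLt i.isLt⟩))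
    (σ : SingSimplex X) (hσ : EtaSmall ν σ) :
    EtaSmall (ηfam (barycenterImage σ)) σ := by
  intro m τ hchain hlast
  classical
  have hid : ∀ g : (SimplexCategory.mk σ.1).toTopObj,
      SimplexCategory.toTopMap (𝟙 (SimplexCategory.mk σ.1)) g = g := by
    intro g
    apply Subtype.ext
    funext i
    change (Finset.univ.filter (· = i)).sum _ = _
    simp [Finset.sum_filter, CategoryTheory.id_apply]
  have hrefl : IsFace σ σ := by
    refine ⟨𝟙 _, fun a b h => h, ?_⟩
    apply ContinuousMap.ext
    intro g
    exact congrArg σ.2 (hid g).symm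
  set τ' : Fin (m + 2) → SingSimplex X := Fin.snoc τ σ with hτ'
  have hchain' : ∀ i : Fin (m + 1), IsFace (τ' i.castSucc) (τ' i.succ) := by
    intro i
    refine Fin.lastCases ?_ ?_ i
    · simp only [hτ', Fin.snoc_castSucc, Fin.succ_last, Fin.snoc_last]
      exact hlast
    · intro j
      simp only [hτ', Fin.succ_castSucc, Fin.snoc_castSucc]
      exact hchain j
  have hlast' : IsFace (τ' (Fin.last (m + 1))) σ := by
    simp only [hτ', Fin.snoc_last]; exact hrefl
  have h := hσ (m + 1) τ' hchain' hlast'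
  rw [hν] at h
  have h0 : τ' 0 = τ 0 := by
    rw [hτ', ← Fin.castSucc_zero, Fin.snoc_castSucc]
  rw [h0] at h
  have h2 := h.trans (Set.iInter_subset _ (Fin.last (m + 1)))
  have hτlast : τ' (Fin.last (m + 1)) = σ := by simp [hτ']
  rw [show barycenterImage (τ' (Fin.last (m + 1))) = barycenterImage σ from by
    rw [hτlast]] at h2
  have hmono := (ηfam (barycenterImage σ)).mono (m + 1)
    ((Fin.last (m + 1) : Fin (m + 2)).val + 1)
    Fin.castSucc (fun a b hab => Fin.castSucc_le_castSucc_iff.mpr hab)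
    (fun j : Fin ((Fin.last (m + 1) : Fin (m + 2)).val + 1) =>
      barycenterImage (τ' ⟨j, lt_of_lt_of_le j.isLt (Fin.last (m + 1)).isLt⟩))
  have heq : ((fun j : Fin ((Fin.last (m + 1) : Fin (m + 2)).val + 1) =>
      barycenterImage (τ' ⟨j, lt_of_lt_of_le j.isLt (Fin.last (m + 1)).isLt⟩)) ∘ Fin.castSucc)
      = fun i : Fin (m + 1) => barycenterImage (τ i) := by
    funext i
    simp only [Function.comp_apply]
    congr 1
    have : (⟨((i.castSucc : Fin (m + 2)) : ℕ), lt_of_lt_of_le (i.castSucc).isLt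
        (Fin.last (m + 1)).isLt⟩ : Fin (m + 2)) = i.castSucc := rfl
    rw [this, hτ', Fin.snoc_castSucc]
  rw [heq] at hmono
  exact h2.trans hmono
end
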